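/- arXiv:1507.08792 — 8 statements merged into one kernel-verified Lean document; each statement's English description precedes it below -/
import Mathlib

section
/- Let G be a graph and e = {x,y} an edge such that the induced subgraph G[N(x) ∩ N(y)] contains k+1 non-edges forming a non-matching (pairwise disjoint non-adjacent pairs). Then every set S of at most k edges such that G − S is diamond-free must contain e. -/
/-- The diamond graph: `K₄` minus one edge. -/
def diamondGraph : SimpleGraph (Fin 4) :=
  (SimpleGraph.completeGraph (Fin 4)).deleteEdges {s(0, 1)}

/-- A graph is diamond-free if it has no induced subgraph isomorphic to a diamond. -/
def DiamondFree {V : Type*} (G : SimpleGraph V) : Prop :=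
  IsEmpty (diamondGraph ↪g G)

/-!
Every non-adjacent pair `{aᵢ, bᵢ}` in the common neighbourhood of `xy` spans, together with
`x` and `y`, a diamond with middle edge `xy`. If `xy` survives in `G - S` and `G - S` is
diamond-free, `S` must therefore hit one of the four spokes `xaᵢ, yaᵢ, xbᵢ, ybᵢ` of every such
diamond. A spoke determines its endpoint in `{aᵢ, bᵢ}`, and these pairs are disjoint, so the
`k + 1` hit spokes are distinct: `S` would have more than `k` edges.
-/

open SimpleGraph Set

section

variable {V : Type*}

theorem Sym2.injective_mk_of_injective_right {ι α : Type*} {u v : ι → α}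
    (hv : Function.Injective v) (hvu : ∀ i j, v i ≠ u j) :
    Function.Injective fun i => s(u i, v i) := fun i j hij =>
  hv ((Sym2.mem_iff.1 ((show s(u i, v i) = s(u j, v j) from hij) ▸
    Sym2.mem_mk_right (u i) (v i))).resolve_left (hvu i j))

theorem DiamondFree.isClique_commonNeighbors {H : SimpleGraph V} (hH : DiamondFree H)
    {x y : V} (hxy : H.Adj x y) : H.IsClique (H.commonNeighbors x y) := by
  intro a ha b hb hab
  rw [mem_commonNeighbors] at ha hb
  by_contra hnab
  have := hxy.ne; have := ha.1.ne'; have := ha.2.ne'; have := hb.1.ne'; have := hb.2.ne'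
  refine hH.elim ⟨⟨![a, b, x, y], fun u v huv => ?_⟩, fun {u v} => ?_⟩
  · fin_cases u <;> fin_cases v <;> simp_all
  · fin_cases u <;> fin_cases v <;>
      simp_all [diamondGraph, Sym2.eq, Sym2.rel_iff', H.adj_comm a b] <;> tauto

theorem exists_spoke_mem_of_diamondFree_deleteEdges {G : SimpleGraph V} {S : Set (Sym2 V)}
    (hS : DiamondFree (G.deleteEdges S)) {x y a b : V} (hxy : G.Adj x y) (hxyS : s(x, y) ∉ S)
    (ha : a ∈ G.commonNeighbors x y) (hb : b ∈ G.commonNeighbors x y)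
    (hnab : ¬ G.Adj a b) (hab : a ≠ b) :
    ∃ u ∈ ({x, y} : Set V), ∃ v ∈ ({a, b} : Set V), s(u, v) ∈ S := by
  by_contra! hspokes
  have hcommon : ∀ v ∈ ({a, b} : Set V), v ∈ (G.deleteEdges S).commonNeighbors x y :=
    fun v hv => by
      have hG := G.mem_commonNeighbors.1 ((Set.mem_insert_iff.1 hv).elim (· ▸ ha) (· ▸ hb))
      exact (mem_commonNeighbors _).2
        ⟨deleteEdges_adj.2 ⟨hG.1, hspokes x (by simp) v hv⟩,
          deleteEdges_adj.2 ⟨hG.2, hspokes y (by simp) v hv⟩⟩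
  exact hnab (hS.isClique_commonNeighbors (deleteEdges_adj.2 ⟨hxy, hxyS⟩)
    (hcommon a (by simp)) (hcommon b (by simp)) hab).1

end

/-- Sunflower rule: if the common neighborhood of the edge {x,y} contains k+1 pairwise
vertex-disjoint non-adjacent pairs, then every set of at most k edges whose deletion makes
the graph diamond-free contains the edge {x,y}. -/
theorem stmt_3 {V : Type*} (G : SimpleGraph V) (x y : V) (k : ℕ)
    (hxy : G.Adj x y)
    (a b : Fin (k + 1) → V)
    (hax : ∀ i, G.Adj x (a i)) (hay : ∀ i, G.Adj y (a i))
    (hbx : ∀ i, G.Adj x (b i)) (hby : ∀ i, G.Adj y (b i))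
    (hnadj : ∀ i, ¬ G.Adj (a i) (b i)) (hne : ∀ i, a i ≠ b i)
    (hdisj : ∀ i j, i ≠ j → ({a i, b i} : Set V) ∩ {a j, b j} = ∅) :
    ∀ S : Set (Sym2 V), S.encard ≤ (k : ℕ∞) →
      DiamondFree (G.deleteEdges S) → s(x, y) ∈ S := by
  intro S hS hdf
  by_contra hxyS
  have ha_common i : a i ∈ G.commonNeighbors x y := G.mem_commonNeighbors.2 ⟨hax i, hay i⟩
  have hb_common i : b i ∈ G.commonNeighbors x y := G.mem_commonNeighbors.2 ⟨hbx i, hby i⟩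
  choose u hu v hv huvS using fun i => exists_spoke_mem_of_diamondFree_deleteEdges hdf hxy hxyS
    (ha_common i) (hb_common i) (hnadj i) (hne i)
  have hv_common : ∀ i, v i ∈ G.commonNeighbors x y := by
    intro i
    rcases hv i with h | h
    · exact h ▸ ha_common i
    · exact Set.mem_singleton_iff.1 h ▸ hb_common i
  have hv_ne_u : ∀ i j, v i ≠ u j := by
    intro i j h
    have := h ▸ hv_common i
    rcases hu j with hx | hy
    · exact G.notMem_commonNeighbors_left x y (hx ▸ this)
    · exact G.notMem_commonNeighbors_right x y (Set.mem_singleton_iff.1 hy ▸ this)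
  have hv_inj : Function.Injective v := fun i j hvij => by
    by_contra hne_ij
    exact (hdisj i j hne_ij).subset ⟨hv i, hvij ▸ hv j⟩
  have hspoke_inj := Sym2.injective_mk_of_injective_right hv_inj hv_ne_u
  have hcard : ((k + 1 : ℕ) : ℕ∞) ≤ k := by
    simpa using hspoke_inj.encard_range.trans ((encard_mono (range_subset_iff.2 huvS)).trans hS)
  exact absurd (ENat.natCast_le_natCast.1 hcard) (Nat.not_succ_le_self k)
end

section
/- Let G' be obtained from G by splitting a vertex v whose neighborhood induces t > 1 components with vertex sets V_1, ..., V_t: delete v and add t new pairwise non-adjacent vertices v_1, ..., v_t, where v_i is adjacent exactly to the vertices of V_i. Then for every pair of new vertices v_i and v_j (i ≠ j), the distance between v_i and v_j in G' is at least four. -/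
/-!
A walk of length at most three between two vertices `a ≠ b` is either an edge `ab`, a common
neighbour, or an edge between a neighbour of `a` and a neighbour of `b`. For two new vertices of
the split graph none of these exist: new vertices are pairwise non-adjacent, and every neighbour
of a new vertex `v_i` lies in `V_i`, so a common neighbour or an edge between the two
neighbourhoods would put a vertex of `V_j` into the component `V_i` of `G[N(v)]`.
-/

/-- The graph obtained from `G` by splitting the vertex `v`: `v` is deleted and replaced
by one new vertex per connected component of `G[N(v)]`, each new vertex being adjacent
exactly to the vertices of its component; new vertices are pairwise non-adjacent. -/
def splitGraph {V : Type*} (G : SimpleGraph V) (v : V) :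
    SimpleGraph ({u : V // u ≠ v} ⊕ (G.induce (G.neighborSet v)).ConnectedComponent) where
  Adj a b :=
    match a, b with
    | Sum.inl u, Sum.inl w => G.Adj u.1 w.1
    | Sum.inl u, Sum.inr c => ∃ h : u.1 ∈ G.neighborSet v,
        (G.induce (G.neighborSet v)).connectedComponentMk ⟨u.1, h⟩ = c
    | Sum.inr c, Sum.inl u => ∃ h : u.1 ∈ G.neighborSet v,
        (G.induce (G.neighborSet v)).connectedComponentMk ⟨u.1, h⟩ = c
    | Sum.inr _, Sum.inr _ => False
  symm := by
    constructor
    rintro (u | c) (w | d) h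
    · exact h.symm
    · exact h
    · exact h
    · exact h
  loopless := by
    constructor
    rintro (u | c) h
    · exact G.irrefl h
    · exact h

theorem SimpleGraph.Walk.four_le_length {α : Type*} {H : SimpleGraph α} {a b : α}
    (p : H.Walk a b) (hne : a ≠ b) (hab : ¬H.Adj a b)
    (hcommon : ∀ x, H.Adj a x → ¬H.Adj x b)
    (hbridge : ∀ x y, H.Adj a x → H.Adj x y → ¬H.Adj y b) :
    4 ≤ p.length :=
  match p, hne with
  | .nil, hne => absurd rfl hne
  | .cons h .nil, _ => absurd h hab
  | .cons h (.cons h' .nil), _ => absurd h' (hcommon _ h)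
  | .cons h (.cons h' (.cons h'' .nil)), _ => absurd h'' (hbridge _ _ h h')
  | .cons _ (.cons _ (.cons _ (.cons _ q))), _ => by simp

namespace splitGraph

variable {V : Type*} {G : SimpleGraph V} {v : V}
  {c d : (G.induce (G.neighborSet v)).ConnectedComponent}

theorem not_adj_inr_inr : ¬(splitGraph G v).Adj (.inr c) (.inr d) := id

theorem eq_of_adj_inr_of_adj_inr {x} (hc : (splitGraph G v).Adj (.inr c) x)
    (hd : (splitGraph G v).Adj x (.inr d)) : c = d := by
  rcases x with u | e
  · obtain ⟨_, rfl⟩ := hc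
    obtain ⟨_, rfl⟩ := hd
    rfl
  · exact hc.elim

theorem eq_of_adj_inr_of_adj_of_adj_inr {x y} (hc : (splitGraph G v).Adj (.inr c) x)
    (hxy : (splitGraph G v).Adj x y) (hd : (splitGraph G v).Adj y (.inr d)) : c = d := by
  rcases x with u | e
  · rcases y with w | f
    · obtain ⟨hu, rfl⟩ := hc
      obtain ⟨hw, rfl⟩ := hd
      exact SimpleGraph.ConnectedComponent.sound
        (show (G.induce (G.neighborSet v)).Adj ⟨u, hu⟩ ⟨w, hw⟩ from hxy).reachable
    · exact hd.elim
  · exact hc.elim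

end splitGraph

/-- After splitting a vertex `v`, any two distinct new vertices are at distance at least
four: every walk between them has length at least 4. -/
theorem stmt_4 {V : Type*} (G : SimpleGraph V) (v : V)
    (c d : (G.induce (G.neighborSet v)).ConnectedComponent) (hcd : c ≠ d) :
    ∀ p : (splitGraph G v).Walk (Sum.inr c) (Sum.inr d), 4 ≤ p.length := fun p =>
  p.four_le_length (Sum.inr_injective.ne hcd) splitGraph.not_adj_inr_inr
    (fun _ hc hd => hcd (splitGraph.eq_of_adj_inr_of_adj_inr hc hd))
    (fun _ _ hc hxy hd => hcd (splitGraph.eq_of_adj_inr_of_adj_of_adj_inr hc hxy hd))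
end

section
/- Let G' be obtained from G by splitting a vertex v (replacing v by one new vertex per connected component of G[N(v)], each adjacent exactly to its component). If a vertex u ≠ v has connected neighborhood in G, then u has connected neighborhood in G'. Moreover, every new vertex v_i has connected neighborhood in G'. -/
/-!
For an old vertex `u`, sending `v` to the new vertex of the component of `G[N(v)]` containing `u`
and fixing every other vertex is a surjective homomorphism `G[N(u)] → G'[N(u)]`: a common neighbor
`w` of `u` and `v` is adjacent to `u` inside `G[N(v)]`, hence lies in the same component. The
neighborhood of a new vertex `v_i` is the surjective image of the component `V_i`, which is
connected. Connectedness passes to surjective images.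
-/

namespace splitGraph

open SimpleGraph

variable {V : Type*} {G : SimpleGraph V} {v : V}

lemma adj_inr_componentMk_inl {u w : {u : V // u ≠ v}} (hu : G.Adj v u) (hw : G.Adj v w)
    (huw : G.Adj u w) :
    (splitGraph G v).Adj (.inr ((G.induce (G.neighborSet v)).connectedComponentMk ⟨u, hu⟩))
      (.inl w) :=
  ⟨hw, ConnectedComponent.connectedComponentMk_eq_of_adj (G := G.induce _) huw.symm⟩

open Classical in
variable (v) in
noncomputable def inlNeighborHom (u : {u : V // u ≠ v}) :
    G.induce (G.neighborSet u) →g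
      (splitGraph G v).induce ((splitGraph G v).neighborSet (.inl u)) where
  toFun w :=
    if h : w.1 = v then
      let hu : G.Adj v u := (congrArg (G.Adj · u) h).mp (w.2 : G.Adj u w).symm
      ⟨.inr ((G.induce (G.neighborSet v)).connectedComponentMk ⟨u, hu⟩), ⟨_, rfl⟩⟩
    else ⟨.inl ⟨w, h⟩, w.2⟩
  map_rel' {a b} hab := by
    change G.Adj a b at hab
    by_cases ha : a.1 = v <;> by_cases hb : b.1 = v <;> simp only [ha, hb, dite_true, dite_false]
    · exact (hab.ne (ha.trans hb.symm)).elim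
    · rw [ha] at hab
      exact adj_inr_componentMk_inl (w := ⟨b.1, hb⟩) _ hab b.2
    · rw [hb] at hab
      exact (adj_inr_componentMk_inl (w := ⟨a.1, ha⟩) _ hab.symm a.2).symm
    · exact hab

lemma inlNeighborHom_surjective (u : {u : V // u ≠ v}) :
    Function.Surjective (inlNeighborHom v u (G := G)) := by
  rintro ⟨w | c, hw⟩
  · exact ⟨⟨w, hw⟩, by simp [inlNeighborHom, w.2]⟩
  · obtain ⟨hu, rfl⟩ := hw
    exact ⟨⟨v, (hu : G.Adj v u).symm⟩, by simp [inlNeighborHom]⟩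

variable (v) in
def componentHom (c : (G.induce (G.neighborSet v)).ConnectedComponent) :
    c.toSimpleGraph →g (splitGraph G v).induce ((splitGraph G v).neighborSet (.inr c)) where
  toFun w := ⟨.inl ⟨w.1, (G.ne_of_adj w.1.2).symm⟩, w.1.2, w.2⟩
  map_rel' h := h

lemma componentHom_surjective (c : (G.induce (G.neighborSet v)).ConnectedComponent) :
    Function.Surjective (componentHom v c) := by
  rintro ⟨w | d, hw⟩
  · obtain ⟨h, hc⟩ := hw
    exact ⟨⟨⟨w, h⟩, hc⟩, rfl⟩
  · exact hw.elim

end splitGraph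

open SimpleGraph splitGraph in
/-- Splitting a vertex `v` preserves connected neighborhoods: every vertex `u ≠ v` with
connected neighborhood in `G` has connected neighborhood in the split graph, and every
new vertex has connected neighborhood in the split graph. -/
theorem stmt_5 {V : Type*} (G : SimpleGraph V) (v : V) :
    (∀ u : {u : V // u ≠ v},
      (G.induce (G.neighborSet u.1)).Connected →
      ((splitGraph G v).induce ((splitGraph G v).neighborSet (Sum.inl u))).Connected) ∧
    (∀ c : (G.induce (G.neighborSet v)).ConnectedComponent,
      ((splitGraph G v).induce ((splitGraph G v).neighborSet (Sum.inr c))).Connected) :=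
  ⟨fun u hu => hu.map _ (inlNeighborHom_surjective u),
    fun c => c.connected_toSimpleGraph.map _ (componentHom_surjective c)⟩
end

section
/- Let G be a graph and C a clique of G with at least 2k+2 vertices. Then every set S of at most k edges such that G − S is diamond-free contains no edge with both endpoints in C. -/
/-!
Each edge of `S` has two endpoints, so `S` touches at most `2k` vertices and the clique `C`
keeps two vertices `u, v` untouched by `S`. If `S` contained an edge `xy` inside `C`, then
`x, y, u, v` would induce a diamond in `G − S`: of the six pairs only `xy` has been deleted.
-/

section

variable {V : Type*}

def edgeEndpoints (S : Set (Sym2 V)) : Set V := {v | ∃ e ∈ S, v ∈ e}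

theorem encard_edgeEndpoints_le (S : Set (Sym2 V)) :
    (edgeEndpoints S).encard ≤ 2 * S.encard := by
  have hsub : edgeEndpoints S ⊆ (fun e ↦ e.out.1) '' S ∪ (fun e ↦ e.out.2) '' S := by
    rintro v ⟨e, he, hve⟩
    rw [← Quot.out_eq e, Sym2.mem_iff] at hve
    exact hve.imp (fun h ↦ ⟨e, he, h.symm⟩) (fun h ↦ ⟨e, he, h.symm⟩)
  calc (edgeEndpoints S).encard
      ≤ ((fun e ↦ e.out.1) '' S ∪ (fun e ↦ e.out.2) '' S).encard := Set.encard_le_encard hsub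
    _ ≤ ((fun e ↦ e.out.1) '' S).encard + ((fun e ↦ e.out.2) '' S).encard :=
        Set.encard_union_le _ _
    _ ≤ S.encard + S.encard := add_le_add (Set.encard_image_le _ _) (Set.encard_image_le _ _)
    _ = 2 * S.encard := (two_mul _).symm

theorem Set.one_lt_encard_diff_of_encard_le {s t : Set V} {n : ℕ} (ht : t.encard ≤ n)
    (hs : ((n + 2 : ℕ) : ℕ∞) ≤ s.encard) : 1 < (s \ t).encard := by
  by_contra! h
  have : s.encard ≤ ((n + 1 : ℕ) : ℕ∞) :=
    calc s.encard ≤ (s \ t).encard + t.encard := Set.encard_le_encard_sdiff_add_encard s t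
      _ ≤ 1 + n := add_le_add h ht
      _ = ((n + 1 : ℕ) : ℕ∞) := by push_cast; ring
  have := hs.trans this
  norm_cast at this
  omega

theorem not_diamondFree_deleteEdges {G : SimpleGraph V} {S : Set (Sym2 V)} {x y u v : V}
    (hK : G.IsClique {x, y, u, v}) (hxy : x ≠ y) (huv : u ≠ v) (hS : s(x, y) ∈ S)
    (hu : u ∉ edgeEndpoints S) (hv : v ∉ edgeEndpoints S) :
    ¬ DiamondFree (G.deleteEdges S) := by
  have hxu : x ≠ u := by rintro rfl; exact hu ⟨_, hS, Sym2.mem_mk_left x y⟩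
  have hyu : y ≠ u := by rintro rfl; exact hu ⟨_, hS, Sym2.mem_mk_right x y⟩
  have hxv : x ≠ v := by rintro rfl; exact hv ⟨_, hS, Sym2.mem_mk_left x y⟩
  have hyv : y ≠ v := by rintro rfl; exact hv ⟨_, hS, Sym2.mem_mk_right x y⟩
  have huS : ∀ a, s(a, u) ∉ S ∧ s(u, a) ∉ S := fun a ↦
    ⟨fun h ↦ hu ⟨_, h, Sym2.mem_mk_right a u⟩, fun h ↦ hu ⟨_, h, Sym2.mem_mk_left u a⟩⟩
  have hvS : ∀ a, s(a, v) ∉ S ∧ s(v, a) ∉ S := fun a ↦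
    ⟨fun h ↦ hv ⟨_, h, Sym2.mem_mk_right a v⟩, fun h ↦ hv ⟨_, h, Sym2.mem_mk_left v a⟩⟩
  set f : Fin 4 → V := ![x, y, u, v]
  have hf : Function.Injective f := by
    intro a b hab
    fin_cases a <;> fin_cases b <;> simp_all [f, eq_comm]
  have hfK : ∀ a, f a ∈ ({x, y, u, v} : Set V) := by
    intro a; fin_cases a <;> simp [f]
  refine fun h ↦ h.elim ⟨⟨f, hf⟩, fun {a b} ↦ ?_⟩
  change (G.deleteEdges S).Adj (f a) (f b) ↔ diamondGraph.Adj a b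
  have hGadj : G.Adj (f a) (f b) ↔ a ≠ b :=
    ⟨fun h ↦ hf.ne_iff.mp h.ne, fun h ↦ hK (hfK a) (hfK b) (hf.ne h)⟩
  rw [SimpleGraph.deleteEdges_adj, hGadj]
  fin_cases a <;> fin_cases b <;> simp [f, diamondGraph, hS, Sym2.eq_swap (a := y), huS, hvS]

end

/-- If `C` is a clique with at least `2k+2` vertices, then any set of at most `k` edges
whose deletion makes `G` diamond-free contains no edge with both endpoints in `C`. -/
theorem stmt_8 {V : Type*} (G : SimpleGraph V) (k : ℕ) (C : Set V)
    (hC : G.IsClique C) (hcard : ((2 * k + 2 : ℕ) : ℕ∞) ≤ C.encard) :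
    ∀ S : Set (Sym2 V), S ⊆ G.edgeSet → S.encard ≤ (k : ℕ∞) →
      DiamondFree (G.deleteEdges S) →
      ∀ x ∈ C, ∀ y ∈ C, s(x, y) ∉ S := by
  intro S hSG hSk hfree x hx y hy hxyS
  have hxy : x ≠ y := G.ne_of_adj (hSG hxyS)
  have hT : (edgeEndpoints S).encard ≤ (2 * k : ℕ) :=
    calc (edgeEndpoints S).encard ≤ 2 * S.encard := encard_edgeEndpoints_le S
      _ ≤ (2 * k : ℕ) := by push_cast; gcongr
  obtain ⟨u, v, ⟨huC, huT⟩, ⟨hvC, hvT⟩, huv⟩ :=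
    Set.one_lt_encard_iff.mp (Set.one_lt_encard_diff_of_encard_le hT hcard)
  have hK : G.IsClique {x, y, u, v} :=
    hC.subset (by simp [Set.insert_subset_iff, hx, hy, huC, hvC])
  exact not_diamondFree_deleteEdges hK hxy huv hxyS huT hvT hfree
end

section
/- Let G be a graph, C a clique of G, and C' ⊆ C a set of vertices each of which is local to C (i.e., N(v) ⊆ C for every v ∈ C'). Then every induced diamond in G contains at most one vertex of C'. -/
instance : DecidableRel diamondGraph.Adj := fun a b =>
  decidable_of_iff (a ≠ b ∧ ¬s(a, b) = s(0, 1))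
    (by simp [diamondGraph, SimpleGraph.deleteEdges_adj, SimpleGraph.completeGraph])

theorem SimpleGraph.IsClique.comap {V W : Type*} {G : SimpleGraph W} {H : SimpleGraph V}
    {t : Set W} (h : G.IsClique t) (f : H ↪g G) : H.IsClique (f ⁻¹' t) :=
  fun _ ha _ hb hab => f.map_adj_iff.1 (h ha hb (f.injective.ne hab))

theorem diamondGraph_isClique_neighborSet_iff {v : Fin 4} :
    diamondGraph.IsClique (diamondGraph.neighborSet v) ↔ v = 0 ∨ v = 1 := by
  rw [← SimpleGraph.coe_neighborFinset]
  revert v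
  decide

/-- If every vertex of `C' ⊆ C` is local to the clique `C` (all its neighbors lie in
`C`), then every induced diamond of `G` contains at most one vertex of `C'`. -/
theorem stmt_9 {V : Type*} (G : SimpleGraph V) (C C' : Set V)
    (hC : G.IsClique C) (hC' : C' ⊆ C)
    (hloc : ∀ v ∈ C', G.neighborSet v ⊆ C) :
    ∀ f : diamondGraph ↪g G, (Set.range ⇑f ∩ C').Subsingleton := by
  rintro f _ ⟨⟨a, rfl⟩, ha⟩ _ ⟨⟨b, rfl⟩, hb⟩
  have tip : ∀ v, f v ∈ C' → v = 0 ∨ v = 1 := fun v hv =>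
    diamondGraph_isClique_neighborSet_iff.1 <| by
      simpa only [SimpleGraph.Embedding.preimage_neighborSet] using
        (hC.subset (hloc _ hv)).comap f
  by_contra hne
  have hab : diamondGraph.Adj a b := f.map_adj_iff.1 (hC (hC' ha) (hC' hb) hne)
  rcases tip a ha with rfl | rfl <;> rcases tip b hb with rfl | rfl <;>
    exact absurd hab (by decide)
end

section
/- Let G be a graph, V_X ⊆ V(G) a set of vertices such that G − V_X is diamond-free, X a maximal set of edge-disjoint induced diamonds of G whose vertices are exactly V_X, and C the vertex set of a maximal clique of G − V_X. If a vertex v ∈ V_X is adjacent to at least two vertices of C, then v is adjacent to all vertices of C. -/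
/-
If `v ∈ VX` saw two vertices `a, b` of `C` but missed some `c ∈ C`, then `v, c, a, b` would
span an induced diamond with `v ≁ c`. Every edge of that diamond contains `a` or `b`, which lie
outside `VX`, so it has no edge inside `VX`, contradicting the maximality of the packing.
-/

lemma diamondGraph_adj_two_or_three {i j : Fin 4} (h : diamondGraph.Adj i j) :
    i = 2 ∨ i = 3 ∨ j = 2 ∨ j = 3 := by
  fin_cases i <;> fin_cases j <;> simp_all [diamondGraph]

namespace SimpleGraph

variable {V : Type*} (G : SimpleGraph V)

def diamondEmbedding {u w x y : V} (huw : u ≠ w) (hnuw : ¬G.Adj u w) (hux : G.Adj u x)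
    (huy : G.Adj u y) (hwx : G.Adj w x) (hwy : G.Adj w y) (hxy : G.Adj x y) :
    diamondGraph ↪g G where
  toFun := ![u, w, x, y]
  inj' i j hij := by
    fin_cases i <;> fin_cases j <;>
      simp_all [hux.ne, huy.ne, hwx.ne, hwy.ne, hxy.ne, hux.ne.symm, huy.ne.symm, hwx.ne.symm,
        hwy.ne.symm, hxy.ne.symm]
  map_rel_iff' {i j} := by
    change G.Adj (![u, w, x, y] i) (![u, w, x, y] j) ↔ _
    fin_cases i <;> fin_cases j <;>
      simp_all [diamondGraph, hux.symm, huy.symm, hwx.symm, hwy.symm, hxy.symm,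
        G.adj_comm w u]

end SimpleGraph

theorem stmt_10_general {V : Type*} (G : SimpleGraph V) (VX : Set V)
    (hdia : ∀ f : diamondGraph ↪g G, ∃ x y : Fin 4,
      diamondGraph.Adj x y ∧ f x ∈ VX ∧ f y ∈ VX)
    (C : Set V) (hCdisj : C ⊆ VXᶜ) (hC : G.IsClique C)
    (v : V) (hv : v ∈ VX)
    (a b : V) (ha : a ∈ C) (hb : b ∈ C) (hab : a ≠ b)
    (hva : G.Adj v a) (hvb : G.Adj v b) :
    ∀ c ∈ C, G.Adj v c := by
  intro c hc
  by_contra hvc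
  have hca : c ≠ a := by rintro rfl; exact hvc hva
  have hcb : c ≠ b := by rintro rfl; exact hvc hvb
  have hvc' : v ≠ c := by rintro rfl; exact hCdisj hc hv
  obtain ⟨i, j, hij, hi, hj⟩ := hdia <| G.diamondEmbedding hvc' hvc hva hvb
    (hC hc ha hca) (hC hc hb hcb) (hC ha hb hab)
  rcases diamondGraph_adj_two_or_three hij with rfl | rfl | rfl | rfl
  · exact hCdisj ha hi
  · exact hCdisj hb hi
  · exact hCdisj ha hj
  · exact hCdisj hb hj

/-- Let `VX` be a D-modulator (so `G - VX` is diamond-free) such that every induced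
diamond of `G` has an edge with both endpoints in `VX` (as provided by a maximal packing
of edge-disjoint diamonds with vertex set `VX`), and let `C` be the vertex set of a
maximal clique of `G - VX`. If `v ∈ VX` is adjacent to at least two vertices of `C`,
then `v` is adjacent to all vertices of `C`. -/
theorem stmt_10 {V : Type*} (G : SimpleGraph V) (VX : Set V)
    (hdf : DiamondFree (G.induce VXᶜ))
    (hdia : ∀ f : diamondGraph ↪g G, ∃ x y : Fin 4,
      diamondGraph.Adj x y ∧ f x ∈ VX ∧ f y ∈ VX)
    (C : Set V) (hCdisj : C ⊆ VXᶜ) (hC : G.IsClique C)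
    (hmax : ∀ D : Set V, G.IsClique D → D ⊆ VXᶜ → C ⊆ D → D = C)
    (v : V) (hv : v ∈ VX)
    (a b : V) (ha : a ∈ C) (hb : b ∈ C) (hab : a ≠ b)
    (hva : G.Adj v a) (hvb : G.Adj v b) :
    ∀ c ∈ C, G.Adj v c :=
  stmt_10_general G VX hdia C hCdisj hC v hv a b ha hb hab hva hvb
end

section
/- For fixed s ≥ 1, let G be a triangle-free graph, G' the graph obtained by adding a dominating vertex w, S ⊆ V(G), and F the set of edges {w, v} for v ∈ S. Then G − S is K_{1,s+1}-free if and only if G' − F is s-diamond-free. -/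
/-- The `s`-diamond `K₂ × (s+1)K₁`: two adjacent center vertices, each adjacent to `s+1`
pairwise non-adjacent vertices. For `s = 1` this is the diamond. -/
def sDiamond (s : ℕ) : SimpleGraph (Fin 2 ⊕ Fin (s + 1)) where
  Adj a b :=
    match a, b with
    | Sum.inl x, Sum.inl y => x ≠ y
    | Sum.inl _, Sum.inr _ => True
    | Sum.inr _, Sum.inl _ => True
    | Sum.inr _, Sum.inr _ => False
  symm := by
    constructor
    rintro (x | x) (y | y) h
    · exact h.symm
    · trivial
    · trivial
    · exact h
  loopless := by
    constructor
    rintro (x | x) h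
    · exact h rfl
    · exact h

/-- The star `K_{1,n}`: one center adjacent to `n` pairwise non-adjacent leaves. -/
def starGraph (n : ℕ) : SimpleGraph (Fin 1 ⊕ Fin n) where
  Adj a b :=
    match a, b with
    | Sum.inl _, Sum.inr _ => True
    | Sum.inr _, Sum.inl _ => True
    | _, _ => False
  symm := by
    constructor
    rintro (x | x) (y | y) h
    · exact h
    · trivial
    · trivial
    · exact h
  loopless := ⟨by rintro (x | x) h <;> exact h⟩

/-- The graph obtained from `G` by adding a new dominating vertex `none` adjacent to all
vertices of `G`. -/
def cone {V : Type*} (G : SimpleGraph V) : SimpleGraph (Option V) where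
  Adj a b :=
    match a, b with
    | some x, some y => G.Adj x y
    | some _, none => True
    | none, some _ => True
    | none, none => False
  symm := by
    constructor
    rintro (_ | x) (_ | y) h
    · exact h
    · trivial
    · trivial
    · exact h.symm
  loopless := by
    constructor
    rintro (_ | x) h
    · exact h
    · exact G.irrefl h

/-! Since `G` is triangle-free, every triangle of `G' − F` passes through the apex `w`. The two
centres of an `s`-diamond form a triangle with each leaf, so `w` is one of the centres; the other
centre and the leaves are then neighbours of `w`, i.e. vertices outside `S`, and they span an
induced `K_{1,s+1}` in `G − S`. Conversely `w` together with an induced `K_{1,s+1}` of `G − S` is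
an induced `s`-diamond of `G' − F`. -/

open Function

section

variable {V W : Type*}

theorem nonempty_starGraph_embedding_iff (K : SimpleGraph W) (n : ℕ) :
    Nonempty (starGraph n ↪g K) ↔ ∃ (c : W) (l : Fin n → W), Injective l ∧
      (∀ i, K.Adj c (l i)) ∧ Pairwise fun i j => ¬ K.Adj (l i) (l j) := by
  constructor
  · rintro ⟨f⟩
    exact ⟨f (Sum.inl 0), f ∘ Sum.inr, f.injective.comp Sum.inr_injective,
      fun _ => f.map_rel_iff.2 trivial, fun _ _ _ h => f.map_rel_iff.1 h⟩
  · rintro ⟨c, l, hl, hc, hpair⟩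
    refine ⟨⟨⟨Sum.elim (fun _ => c) l, ?_⟩, ?_⟩⟩
    · rintro (x | i) (y | j) h
      · exact congrArg Sum.inl (Subsingleton.elim x y)
      · exact absurd h (hc j).ne
      · exact absurd h.symm (hc i).ne
      · exact congrArg Sum.inr (hl h)
    · rintro (x | i) (y | j)
      · exact iff_of_false K.irrefl id
      · exact iff_of_true (hc j) trivial
      · exact iff_of_true (hc i).symm trivial
      · refine iff_of_false ?_ id
        rcases eq_or_ne i j with rfl | hij
        exacts [K.irrefl, hpair hij]

theorem nonempty_sDiamond_embedding_iff (K : SimpleGraph W) (s : ℕ) :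
    Nonempty (sDiamond s ↪g K) ↔ ∃ (a b : W) (l : Fin (s + 1) → W), K.Adj a b ∧ Injective l ∧
      (∀ i, K.Adj a (l i) ∧ K.Adj b (l i)) ∧ Pairwise fun i j => ¬ K.Adj (l i) (l j) := by
  constructor
  · rintro ⟨f⟩
    exact ⟨f (Sum.inl 0), f (Sum.inl 1), f ∘ Sum.inr,
      f.map_rel_iff.2 (show (0 : Fin 2) ≠ 1 by decide), f.injective.comp Sum.inr_injective,
      fun _ => ⟨f.map_rel_iff.2 trivial, f.map_rel_iff.2 trivial⟩, fun _ _ _ h => f.map_rel_iff.1 h⟩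
  · rintro ⟨a, b, l, hab, hl, hadj, hpair⟩
    refine ⟨⟨⟨Sum.elim ![a, b] l, ?_⟩, ?_⟩⟩
    · rintro (x | i) (y | j) h
      · fin_cases x <;> fin_cases y
        exacts [rfl, absurd h hab.ne, absurd h.symm hab.ne, rfl]
      · fin_cases x
        exacts [absurd h (hadj j).1.ne, absurd h (hadj j).2.ne]
      · fin_cases y
        exacts [absurd h.symm (hadj i).1.ne, absurd h.symm (hadj i).2.ne]
      · exact congrArg Sum.inr (hl h)
    · rintro (x | i) (y | j)
      · show K.Adj (![a, b] x) (![a, b] y) ↔ x ≠ y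
        fin_cases x <;> fin_cases y
        exacts [iff_of_false K.irrefl (· rfl), iff_of_true hab (by decide),
          iff_of_true hab.symm (by decide), iff_of_false K.irrefl (· rfl)]
      · fin_cases x
        exacts [iff_of_true (hadj j).1 trivial, iff_of_true (hadj j).2 trivial]
      · fin_cases y
        exacts [iff_of_true (hadj i).1.symm trivial, iff_of_true (hadj i).2.symm trivial]
      · refine iff_of_false ?_ id
        rcases eq_or_ne i j with rfl | hij
        exacts [K.irrefl, hpair hij]

/-- The graph `G' − F` of the paper. -/
def partialCone (G : SimpleGraph V) (S : Set V) : SimpleGraph (Option V) :=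
  (cone G).deleteEdges {e | ∃ v ∈ S, e = s(none, some v)}

variable {G : SimpleGraph V} {S : Set V}

theorem partialCone_adj_some_some {x y : V} :
    (partialCone G S).Adj (some x) (some y) ↔ G.Adj x y := by
  simp [partialCone, cone]

theorem partialCone_adj_none {u : Option V} :
    (partialCone G S).Adj none u ↔ ∃ v : ↥Sᶜ, u = some ↑v := by
  rcases u with _ | u <;> simp [partialCone, cone]

theorem partialCone_triangle_eq_none (htf : G.CliqueFree 3) {a b c : Option V}
    (hab : (partialCone G S).Adj a b) (hac : (partialCone G S).Adj a c)
    (hbc : (partialCone G S).Adj b c) : a = none ∨ b = none ∨ c = none := by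
  rcases a with _ | x
  · exact .inl rfl
  rcases b with _ | y
  · exact .inr (.inl rfl)
  rcases c with _ | z
  · exact .inr (.inr rfl)
  simp only [partialCone_adj_some_some] at hab hac hbc
  classical
  exact (htf {x, y, z} (SimpleGraph.is3Clique_triple_iff.2 ⟨hab, hac, hbc⟩)).elim

theorem nonempty_sDiamond_embedding_partialCone_of_starGraph {s : ℕ}
    (h : Nonempty (starGraph (s + 1) ↪g G.induce Sᶜ)) :
    Nonempty (sDiamond s ↪g partialCone G S) := by
  obtain ⟨c, l, hl, hc, hpair⟩ := (nonempty_starGraph_embedding_iff _ _).1 h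
  refine (nonempty_sDiamond_embedding_iff _ _).2
    ⟨none, some c, fun i => some (l i), partialCone_adj_none.2 ⟨c, rfl⟩,
      (Option.some_injective V).comp (Subtype.val_injective.comp hl),
      fun i => ⟨partialCone_adj_none.2 ⟨l i, rfl⟩, partialCone_adj_some_some.2 (hc i)⟩,
      fun _ _ hij h => hpair hij (SimpleGraph.induce_adj.2 (partialCone_adj_some_some.1 h))⟩

theorem exists_star_of_partialCone_apex_adj {n : ℕ} {c : Option V} {l : Fin n → Option V}
    (hc : (partialCone G S).Adj none c) (hl : Injective l)
    (hadj : ∀ i, (partialCone G S).Adj none (l i) ∧ (partialCone G S).Adj c (l i))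
    (hpair : Pairwise fun i j => ¬ (partialCone G S).Adj (l i) (l j)) :
    ∃ (c : ↥Sᶜ) (l : Fin n → ↥Sᶜ), Injective l ∧ (∀ i, (G.induce Sᶜ).Adj c (l i)) ∧
      Pairwise fun i j => ¬ (G.induce Sᶜ).Adj (l i) (l j) := by
  obtain ⟨c, rfl⟩ := partialCone_adj_none.1 hc
  choose l' hl' using fun i => partialCone_adj_none.1 (hadj i).1
  obtain rfl : l = fun i => some ↑(l' i) := funext hl'
  exact ⟨c, l', fun i j h => hl (congrArg (some ∘ Subtype.val) h),
    fun i => SimpleGraph.induce_adj.2 (partialCone_adj_some_some.1 (hadj i).2),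
    fun _ _ hij h => hpair hij (partialCone_adj_some_some.2 h)⟩

theorem nonempty_starGraph_embedding_of_partialCone {s : ℕ} (hs : 1 ≤ s)
    (htf : G.CliqueFree 3) (h : Nonempty (sDiamond s ↪g partialCone G S)) :
    Nonempty (starGraph (s + 1) ↪g G.induce Sᶜ) := by
  obtain ⟨a, b, l, hab, hl, hadj, hpair⟩ := (nonempty_sDiamond_embedding_iff _ _).1 h
  have : Nontrivial (Fin (s + 1)) := Fin.nontrivial_iff_two_le.2 (by omega)
  obtain ⟨i, hi⟩ := hl.exists_ne none
  refine (nonempty_starGraph_embedding_iff _ _).2 ?_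
  rcases partialCone_triangle_eq_none htf hab (hadj i).1 (hadj i).2 with rfl | rfl | hli
  · exact exists_star_of_partialCone_apex_adj hab hl hadj hpair
  · exact exists_star_of_partialCone_apex_adj hab.symm hl (fun i => (hadj i).symm) hpair
  · exact absurd hli hi

end

/-- For `s ≥ 1`, `G` triangle-free, `S ⊆ V(G)` and `F` the set of edges from the apex
`w` to the vertices of `S`: `G - S` is `K_{1,s+1}`-free iff `(cone G) - F` is
`s`-diamond-free. -/
theorem stmt_15 {V : Type*} (G : SimpleGraph V) (s : ℕ) (hs : 1 ≤ s)
    (htf : G.CliqueFree 3) (S : Set V) :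
    IsEmpty (starGraph (s + 1) ↪g G.induce Sᶜ) ↔
    IsEmpty (sDiamond s ↪g
      (cone G).deleteEdges {e : Sym2 (Option V) | ∃ v ∈ S, e = s(none, some v)}) := by
  rw [← not_nonempty_iff, ← not_nonempty_iff, not_iff_not]
  exact ⟨nonempty_sDiamond_embedding_partialCone_of_starGraph,
    nonempty_starGraph_embedding_of_partialCone hs htf⟩
end

section
/- Let G be a graph, C a clique of G with |C| ≥ 2k+2, and C' ⊆ C a set of vertices each local to C (N(v) ⊆ C). Let G' be obtained from G by deleting a subset C'' ⊊ C' of vertices with |C \ C''| ≥ 2k+2. Then there is a set of at most k edges of G whose deletion makes G diamond-free if and only if there is such a set for G'. -/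
section Diamond

variable {V W : Type*} {H : SimpleGraph V}

lemma diamondGraph_adj {i j : Fin 4} : diamondGraph.Adj i j ↔ i ≠ j ∧ s(i, j) ≠ s(0, 1) := by
  simp [diamondGraph]

lemma diamondFree_iff :
    DiamondFree H ↔ ∀ ⦃a b c d⦄, a ≠ b → H.Adj a c → H.Adj a d → H.Adj b c → H.Adj b d →
      H.Adj c d → H.Adj a b := by
  constructor
  · intro hH a b c d hab hac had hbc hbd hcd
    by_contra hnab
    have hnba : ¬H.Adj b a := fun h => hnab h.symm
    refine hH.false ⟨⟨![a, b, c, d], fun i j hij => ?_⟩, fun {i j} => ?_⟩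
    · fin_cases i <;> fin_cases j <;> simp_all [hac.ne, had.ne, hbc.ne, hbd.ne, hcd.ne]
    · change H.Adj (![a, b, c, d] i) (![a, b, c, d] j) ↔ _
      fin_cases i <;> fin_cases j <;>
        simp_all [diamondGraph_adj, hac.symm, had.symm, hbc.symm, hbd.symm, hcd.symm,
          Sym2.eq_swap]
  · refine fun h => ⟨fun e => ?_⟩
    have hadj (i j : Fin 4) (hij : i ≠ j ∧ s(i, j) ≠ s(0, 1)) : H.Adj (e i) (e j) :=
      e.map_rel_iff.2 (diamondGraph_adj.2 hij)
    have h01 := h (e.injective.ne (by decide : (0 : Fin 4) ≠ 1))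
      (hadj 0 2 (by decide)) (hadj 0 3 (by decide)) (hadj 1 2 (by decide))
      (hadj 1 3 (by decide)) (hadj 2 3 (by decide))
    exact (diamondGraph_adj.1 (e.map_rel_iff.1 h01)).2 rfl

lemma DiamondFree.of_embedding {H' : SimpleGraph W} (f : H' ↪g H) (h : DiamondFree H) :
    DiamondFree H' :=
  ⟨fun e => h.false (f.comp e)⟩

lemma DiamondFree.adj_of_induce {s : Set V} (h : DiamondFree (H.induce s)) {a b c d : V}
    (ha : a ∈ s) (hb : b ∈ s) (hc : c ∈ s) (hd : d ∈ s) (hab : a ≠ b) (hac : H.Adj a c)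
    (had : H.Adj a d) (hbc : H.Adj b c) (hbd : H.Adj b d) (hcd : H.Adj c d) : H.Adj a b :=
  have key := diamondFree_iff.1 h
  key (a := ⟨a, ha⟩) (b := ⟨b, hb⟩) (c := ⟨c, hc⟩) (d := ⟨d, hd⟩)
    (Subtype.coe_ne_coe.1 hab) hac had hbc hbd hcd

end Diamond

lemma Set.encard_sym2_verts_le {V : Type*} (S : Set (Sym2 V)) :
    {v | ∃ e ∈ S, v ∈ e}.encard ≤ 2 * S.encard := by
  have hsub : {v | ∃ e ∈ S, v ∈ e} ⊆ (fun e => e.out.1) '' S ∪ (fun e => e.out.2) '' S := by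
    rintro v ⟨e, he, hve⟩
    rw [← e.out_eq, Sym2.mem_iff] at hve
    rcases hve with rfl | rfl
    exacts [Or.inl ⟨e, he, rfl⟩, Or.inr ⟨e, he, rfl⟩]
  calc _ ≤ _ := Set.encard_le_encard hsub
    _ ≤ _ := Set.encard_union_le _ _
    _ ≤ S.encard + S.encard := add_le_add (Set.encard_image_le _ _) (Set.encard_image_le _ _)
    _ = 2 * S.encard := (two_mul _).symm

namespace SimpleGraph

variable {V : Type*} {G H : SimpleGraph V}

lemma isClique_deleteEdges_of_diamondFree {k : ℕ} {K : Set V} {S : Set (Sym2 V)}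
    (hK : G.IsClique K) (hKcard : ((2 * k + 2 : ℕ) : ℕ∞) ≤ K.encard) (hS : S.encard ≤ k)
    (hdf : DiamondFree (G.deleteEdges S)) : (G.deleteEdges S).IsClique K := by
  set T := {v | ∃ e ∈ S, v ∈ e}
  have hfree : 1 < (K \ T).encard := by
    have hT : T.encard ≤ ((2 * k : ℕ) : ℕ∞) := by
      push_cast
      exact (Set.encard_sym2_verts_le S).trans (by gcongr)
    calc (1 : ℕ∞) < ((2 * k + 2 : ℕ) : ℕ∞) - ((2 * k : ℕ) : ℕ∞) := by
          rw [← ENat.natCast_sub]; norm_num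
      _ ≤ K.encard - T.encard := tsub_le_tsub hKcard hT
      _ ≤ (K \ T).encard := Set.tsub_encard_le_encard_sdiff K T
  obtain ⟨z, w, ⟨hzK, hzT⟩, ⟨hwK, hwT⟩, hzw⟩ := Set.one_lt_encard_iff.1 hfree
  have hadj {u v : V} (hu : u ∈ K) (hv : v ∈ K) (hvT : v ∉ T) (huv : u ≠ v) :
      (G.deleteEdges S).Adj u v :=
    deleteEdges_adj.2 ⟨hK hu hv huv, fun h => hvT ⟨_, h, Sym2.mem_mk_right u v⟩⟩
  intro x hx y hy hxy
  refine deleteEdges_adj.2 ⟨hK hx hy hxy, fun hxyS => ?_⟩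
  have hxT : x ∈ T := ⟨_, hxyS, Sym2.mem_mk_left x y⟩
  have hyT : y ∈ T := ⟨_, hxyS, Sym2.mem_mk_right x y⟩
  have hxy' := diamondFree_iff.1 hdf hxy
    (hadj hx hzK hzT (ne_of_mem_of_not_mem hxT hzT))
    (hadj hx hwK hwT (ne_of_mem_of_not_mem hxT hwT))
    (hadj hy hzK hzT (ne_of_mem_of_not_mem hyT hzT))
    (hadj hy hwK hwT (ne_of_mem_of_not_mem hyT hwT))
    (hadj hzK hwK hwT hzw)
  exact (deleteEdges_adj.1 hxy').2 hxyS

lemma induce_deleteEdges (s : Set V) (S : Set (Sym2 V)) :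
    (G.deleteEdges S).induce s = (G.induce s).deleteEdges (Sym2.map (↑) ⁻¹' S) := by
  ext u v
  simp

lemma isClique_deleteEdges_image_of_isClique_induce {s C : Set V} {S' : Set (Sym2 s)}
    (hC : G.IsClique C) (h : ((G.induce s).deleteEdges S').IsClique (Subtype.val ⁻¹' C)) :
    (G.deleteEdges (Sym2.map (↑) '' S')).IsClique C := by
  intro x hx y hy hxy
  refine deleteEdges_adj.2 ⟨hC hx hy hxy, ?_⟩
  rintro ⟨e, he, hexy⟩
  induction e using Sym2.ind with | h u v => ?_
  rw [Sym2.map_mk, Sym2.eq_iff] at hexy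
  have hu : (u : V) ∈ C := by rcases hexy with ⟨rfl, -⟩ | ⟨rfl, -⟩ <;> assumption
  have hv : (v : V) ∈ C := by rcases hexy with ⟨-, rfl⟩ | ⟨-, rfl⟩ <;> assumption
  have huv : u ≠ v := by
    rintro rfl; rcases hexy with ⟨rfl, rfl⟩ | ⟨rfl, rfl⟩ <;> exact hxy rfl
  exact (deleteEdges_adj.1 (h hu hv huv)).2 he

lemma diamondFree_of_diamondFree_induce_compl {C L D : Set V} (hC : H.IsClique C)
    (hLC : L ⊆ C) (hloc : ∀ v ∈ L, H.neighborSet v ⊆ C) (hDL : D ⊂ L)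
    (hdf : DiamondFree (H.induce Dᶜ)) :
    DiamondFree H := by
  obtain ⟨w, hwL, hwD⟩ := Set.exists_of_ssubset hDL
  have hwC := hLC hwL
  rw [diamondFree_iff]
  intro a b c d hab hac had hbc hbd hcd
  by_contra hnab
  have hcD : c ∉ D := fun hc =>
    hnab (hC (hloc c (hDL.subset hc) hac.symm) (hloc c (hDL.subset hc) hbc.symm) hab)
  have hdD : d ∉ D := fun hd =>
    hnab (hC (hloc d (hDL.subset hd) had.symm) (hloc d (hDL.subset hd) hbd.symm) hab)
  wlog haD : a ∈ D generalizing a b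
  · by_cases hbD : b ∈ D
    · exact this hab.symm hbc hbd hac had (fun h => hnab h.symm) hbD
    · exact hnab (hdf.adj_of_induce haD hbD hcD hdD hab hac had hbc hbd hcd)
  have hcC := hloc a (hDL.subset haD) hac
  have hdC := hloc a (hDL.subset haD) had
  have hbC : b ∉ C := fun hb => hnab (hC (hLC (hDL.subset haD)) hb hab)
  have hwb : ¬H.Adj w b := fun h => hbC (hloc w hwL h)
  have hwc : w ≠ c := by rintro rfl; exact hwb hbc.symm
  have hwd : w ≠ d := by rintro rfl; exact hwb hbd.symm
  exact hwb (hdf.adj_of_induce hwD (fun hb => hbC (hLC (hDL.subset hb))) hcD hdD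
    (ne_of_mem_of_not_mem hwC hbC) (hC hwC hcC hwc) (hC hwC hdC hwd) hbc hbd hcd)

end SimpleGraph

open SimpleGraph

theorem stmt_18_general {V : Type*} (G : SimpleGraph V) (k : ℕ)
    (C C' C'' : Set V) (hC : G.IsClique C)
    (hC'sub : C' ⊆ C) (hloc : ∀ v ∈ C', G.neighborSet v ⊆ C)
    (hC'' : C'' ⊂ C')
    (hrem : ((2 * k + 2 : ℕ) : ℕ∞) ≤ (C \ C'').encard) :
    (∃ S : Set (Sym2 V), S.encard ≤ (k : ℕ∞) ∧ DiamondFree (G.deleteEdges S)) ↔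
    (∃ S : Set (Sym2 ↥(C''ᶜ)), S.encard ≤ (k : ℕ∞) ∧
      DiamondFree ((G.induce C''ᶜ).deleteEdges S)) := by
  have hinj : Function.Injective (Sym2.map ((↑) : ↥C''ᶜ → V)) :=
    Sym2.map.injective Subtype.val_injective
  constructor
  · rintro ⟨S, hS, hdf⟩
    refine ⟨Sym2.map (↑) ⁻¹' S, ?_, ?_⟩
    · exact (Set.encard_le_encard_of_injOn (Set.mapsTo_preimage _ S) hinj.injOn).trans hS
    · rw [← induce_deleteEdges]
      exact hdf.of_embedding (Embedding.induce _)
  · rintro ⟨S', hS', hdf'⟩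
    have hK : (G.induce C''ᶜ).IsClique (Subtype.val ⁻¹' C) :=
      isClique_induce_iff.2 (hC.subset (Set.image_preimage_subset _ _))
    have hKcard : ((2 * k + 2 : ℕ) : ℕ∞) ≤ (Subtype.val ⁻¹' C : Set ↥C''ᶜ).encard := by
      rwa [← Subtype.val_injective.encard_image, Subtype.image_preimage_coe, Set.inter_comm]
    have hCS : (G.deleteEdges (Sym2.map (↑) '' S')).IsClique C :=
      isClique_deleteEdges_image_of_isClique_induce hC
        (isClique_deleteEdges_of_diamondFree hK hKcard hS' hdf')
    refine ⟨Sym2.map (↑) '' S', by rwa [hinj.injOn.encard_image], ?_⟩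
    refine diamondFree_of_diamondFree_induce_compl hCS hC'sub
      (fun v hv => (neighborSet_mono (deleteEdges_le _) v).trans (hloc v hv)) hC'' ?_
    rwa [induce_deleteEdges, Set.preimage_image_eq _ hinj]

/-- Clique reduction is safe: let `C` be a clique of `G` with at least `2k+2` vertices,
`C' ⊆ C` a set of vertices local to `C`, and `C'' ⊊ C'` with `|C \ C''| ≥ 2k+2`. Then
`G` has a set of at most `k` edges whose deletion makes it diamond-free iff the graph
obtained from `G` by deleting the vertices of `C''` does. -/
theorem stmt_18 {V : Type*} (G : SimpleGraph V) (k : ℕ)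
    (C C' C'' : Set V) (hC : G.IsClique C)
    (hCcard : ((2 * k + 2 : ℕ) : ℕ∞) ≤ C.encard)
    (hC'sub : C' ⊆ C) (hloc : ∀ v ∈ C', G.neighborSet v ⊆ C)
    (hC'' : C'' ⊂ C')
    (hrem : ((2 * k + 2 : ℕ) : ℕ∞) ≤ (C \ C'').encard) :
    (∃ S : Set (Sym2 V), S.encard ≤ (k : ℕ∞) ∧ DiamondFree (G.deleteEdges S)) ↔
    (∃ S : Set (Sym2 ↥(C''ᶜ)), S.encard ≤ (k : ℕ∞) ∧
      DiamondFree ((G.induce C''ᶜ).deleteEdges S)) :=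
  stmt_18_general G k C C' C'' hC hC'sub hloc hC'' hrem
end
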